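/- Theorem 2 (lower bound on forward channel flow): Suppose random variables x_0, x^n, y^n, e^{n-1} satisfy the identity I(x^n → y^n) = I(x_0; y^n) + I(e^{n-1}; x_0 | y^n) + I(e^{n-1} → y^n), and for each i ≤ n−1: x_i is a deterministic function of (x_0, e^{i-1}) and I(x_0; e_i | e^{i-1}, x^i) = 0. Then I(x^n → y^n) ≥ I(x^{n-1} → e^{n-1}) + I(e^{n-1} → y^n), with the gap equal to I(y^n; x_0 | e^{n-1}). -/

import Mathlib

open scoped BigOperators

/-- Distribution of a finite-valued random variable `X` under pmf `p`. -/
noncomputable def rvDist {Ω A : Type*} [Fintype Ω] [Fintype A] [DecidableEq A]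
    (p : Ω → ℝ) (X : Ω → A) (a : A) : ℝ := ∑ ω, if X ω = a then p ω else 0

/-- Shannon entropy `H(X)`. -/
noncomputable def ent {Ω A : Type*} [Fintype Ω] [Fintype A] [DecidableEq A]
    (p : Ω → ℝ) (X : Ω → A) : ℝ := ∑ a, Real.negMulLog (rvDist p X a)

/-- Conditional entropy `H(X | Y) = H(X,Y) - H(Y)`. -/
noncomputable def condEnt {Ω A B : Type*} [Fintype Ω] [Fintype A] [DecidableEq A]
    [Fintype B] [DecidableEq B] (p : Ω → ℝ) (X : Ω → A) (Y : Ω → B) : ℝ :=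
  ent p (fun ω => (X ω, Y ω)) - ent p Y

/-- Mutual information `I(X;Y) = H(X)+H(Y)-H(X,Y)`. -/
noncomputable def MI {Ω A B : Type*} [Fintype Ω] [Fintype A] [DecidableEq A]
    [Fintype B] [DecidableEq B] (p : Ω → ℝ) (X : Ω → A) (Y : Ω → B) : ℝ :=
  ent p X + ent p Y - ent p (fun ω => (X ω, Y ω))

/-- Conditional mutual information `I(X;Y|Z) = H(X|Z)+H(Y|Z)-H(X,Y|Z)`. -/
noncomputable def CMI {Ω A B C : Type*} [Fintype Ω] [Fintype A] [DecidableEq A]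
    [Fintype B] [DecidableEq B] [Fintype C] [DecidableEq C]
    (p : Ω → ℝ) (X : Ω → A) (Y : Ω → B) (Z : Ω → C) : ℝ :=
  condEnt p X Z + condEnt p Y Z - condEnt p (fun ω => (X ω, Y ω)) Z

/-- The prefix `x^i = (x_1, …, x_i)` of a random sequence, as a random variable. -/
def pre {Ω A : Type*} {n : ℕ} (x : Fin n → Ω → A) (i : ℕ) (h : i ≤ n) :
    Ω → (Fin i → A) := fun ω j => x (Fin.castLE h j) ω

/-- Directed information `I(x^n → y^n) = ∑_{i=1}^n I(x^i; y_i | y^{i-1})`. -/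
noncomputable def DI {Ω A B : Type*} [Fintype Ω] [Fintype A] [DecidableEq A]
    [Fintype B] [DecidableEq B] {n : ℕ}
    (p : Ω → ℝ) (x : Fin n → Ω → A) (y : Fin n → Ω → B) : ℝ :=
  ∑ i : Fin n, CMI p (pre x (i.1+1) i.isLt) (y i) (pre y i.1 i.isLt.le)

/-!
Expanding `I(x₀; (yⁿ, eⁿ⁻¹))` by the chain rule in both orders gives
`I(x₀; yⁿ) + I(eⁿ⁻¹; x₀ | yⁿ) = I(x₀; eⁿ⁻¹) + I(yⁿ; x₀ | eⁿ⁻¹)`, which turns the assumed identity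
into the claimed equality once `I(x₀; eⁿ⁻¹) = I(xⁿ⁻¹ → eⁿ⁻¹)` (Lemma 1 of the paper); the
inequality is then nonnegativity of conditional mutual information (Gibbs' inequality).

For Lemma 1, the chain rule writes `I(x₀; eⁿ⁻¹)` as `∑ᵢ I(x₀; eᵢ | eⁱ⁻¹)`, and each term equals
`I(xⁱ; eᵢ | eⁱ⁻¹)`: both are `I((x₀, xⁱ); eᵢ | eⁱ⁻¹)`, because `xⁱ` is a function of `(x₀, eⁱ⁻¹)`
and `eᵢ` is conditionally independent of `x₀` given `(eⁱ⁻¹, xⁱ)`.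
-/

open Finset Real

lemma sub_mul_div_le_mul_log {r u v s : ℝ} (hr : 0 ≤ r) (hu : r ≤ u) (hv : r ≤ v) (hs : r ≤ s) :
    r - u * v / s ≤ r * (log r + log s - log u - log v) := by
  rcases hr.eq_or_lt with rfl | hr
  · simpa using div_nonneg (mul_nonneg hu hv) hs
  have hu := hr.trans_le hu
  have hv := hr.trans_le hv
  have hs := hr.trans_le hs
  have key := mul_le_mul_of_nonneg_left
    (one_sub_inv_le_log_of_pos (by positivity : 0 < r * s / (u * v))) hr.le
  rw [log_div (by positivity) (by positivity), log_mul hr.ne' hs.ne', log_mul hu.ne' hv.ne',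
    inv_div] at key
  have hlhs : r * (1 - u * v / (r * s)) = r - u * v / s := by field_simp
  linarith

/-- Mutual information of a (not necessarily normalized) joint mass function `r` is
nonnegative. -/
theorem negMulLog_sum_add_sum_negMulLog_le {A B : Type*} [Fintype A] [Fintype B]
    (r : A → B → ℝ) (hr : ∀ a b, 0 ≤ r a b) :
    negMulLog (∑ a, ∑ b, r a b) + ∑ a, ∑ b, negMulLog (r a b) ≤
      ∑ a, negMulLog (∑ b, r a b) + ∑ b, negMulLog (∑ a, r a b) := by
  set u : A → ℝ := fun a => ∑ b, r a b
  set v : B → ℝ := fun b => ∑ a, r a b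
  set s := ∑ a, u a
  have hu : ∀ a, ∑ b, r a b = u a := fun _ => rfl
  have hv : ∀ b, ∑ a, r a b = v b := fun _ => rfl
  have hterm : ∀ a b, r a b - u a * v b / s ≤
      r a b * (log (r a b) + log s - log (u a) - log (v b)) := fun a b =>
    sub_mul_div_le_mul_log (hr a b)
      (single_le_sum (fun b _ => hr a b) (mem_univ b))
      (single_le_sum (fun a _ => hr a b) (mem_univ a))
      ((single_le_sum (fun b _ => hr a b) (mem_univ b)).trans
        (single_le_sum (fun a _ => sum_nonneg fun b _ => hr a b) (mem_univ a)))
  have hlhs : ∑ a, ∑ b, (r a b - u a * v b / s) = 0 := by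
    simp only [sum_sub_distrib, ← sum_div, ← mul_sum, ← sum_mul]
    rw [show ∑ b, v b = s from sum_comm, mul_self_div_self, sub_self]
  have hrhs : ∑ a, ∑ b, r a b * (log (r a b) + log s - log (u a) - log (v b)) =
      ∑ a, negMulLog (u a) + ∑ b, negMulLog (v b) - negMulLog s
        - ∑ a, ∑ b, negMulLog (r a b) := by
    simp only [mul_add, mul_sub, sum_add_distrib, sum_sub_distrib, ← sum_mul, hu, negMulLog]
    rw [sum_comm (f := fun a b => r a b * log (v b))]
    simp only [← sum_mul, hv, neg_mul, sum_neg_distrib]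
    ring
  have := sum_le_sum fun a (_ : a ∈ univ) => sum_le_sum fun b (_ : b ∈ univ) => hterm a b
  linarith

section Entropy

variable {Ω A A' B C C' D : Type*} [Fintype Ω] [Fintype A] [DecidableEq A]
  [Fintype A'] [DecidableEq A'] [Fintype B] [DecidableEq B] [Fintype C] [DecidableEq C]
  [Fintype C'] [DecidableEq C'] [Fintype D] [DecidableEq D] (p : Ω → ℝ)

lemma rvDist_nonneg (hp : ∀ ω, 0 ≤ p ω) (X : Ω → A) (a : A) : 0 ≤ rvDist p X a :=
  sum_nonneg fun ω _ => by split_ifs <;> simp [hp ω]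

lemma rvDist_comp_of_injective {f : A → B} (hf : Function.Injective f) (X : Ω → A) (a : A) :
    rvDist p (fun ω => f (X ω)) (f a) = rvDist p X a := by
  simp only [rvDist, hf.eq_iff]

lemma ent_comp_of_injective {f : A → B} (hf : Function.Injective f) (X : Ω → A) :
    ent p (fun ω => f (X ω)) = ent p X := by
  have hzero : ∀ b ∉ univ.image f, negMulLog (rvDist p (fun ω => f (X ω)) b) = 0 := by
    intro b hb
    have hne : ∀ ω, f (X ω) ≠ b := fun ω h => hb (h ▸ mem_image_of_mem f (mem_univ _))
    simp [rvDist, hne]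
  rw [ent, ← sum_subset (subset_univ _) fun b _ hb => hzero b hb, sum_image hf.injOn]
  simp only [rvDist_comp_of_injective p hf, ent]

lemma ent_congr {X : Ω → A} {Y : Ω → B} (f : A → B) (g : B → A)
    (hf : ∀ ω, f (X ω) = Y ω) (hg : ∀ ω, g (Y ω) = X ω) : ent p X = ent p Y := by
  have hX := ent_comp_of_injective p (f := fun a => (a, f a))
    (fun a b h => congrArg Prod.fst h) X
  have hY := ent_comp_of_injective p (f := fun b => (g b, b))
    (fun a b h => congrArg Prod.snd h) Y
  simp only [hf, hg] at hX hY
  rw [← hX, hY]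

lemma ent_eq_zero_of_unique [Unique D] (hp1 : ∑ ω, p ω = 1) (W : Ω → D) : ent p W = 0 := by
  have hW : rvDist p W default = 1 := by
    rw [← hp1]
    exact sum_congr rfl fun ω _ => if_pos (Unique.eq_default (W ω))
  simp [ent, hW]

lemma condEnt_congr_left {X : Ω → A} {X' : Ω → A'} (Z : Ω → C) (f : A → A') (g : A' → A)
    (hf : ∀ ω, f (X ω) = X' ω) (hg : ∀ ω, g (X' ω) = X ω) :
    condEnt p X Z = condEnt p X' Z := by
  rw [condEnt, condEnt, ent_congr p (X := fun ω => (X ω, Z ω)) (Y := fun ω => (X' ω, Z ω))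
    (fun t => (f t.1, t.2)) (fun t => (g t.1, t.2)) (fun ω => by simp [hf ω])
    (fun ω => by simp [hg ω])]

lemma condEnt_congr_right (X : Ω → A) {Z : Ω → C} {Z' : Ω → C'} (f : C → C') (g : C' → C)
    (hf : ∀ ω, f (Z ω) = Z' ω) (hg : ∀ ω, g (Z' ω) = Z ω) :
    condEnt p X Z = condEnt p X Z' := by
  rw [condEnt, condEnt, ent_congr p f g hf hg,
    ent_congr p (X := fun ω => (X ω, Z ω)) (Y := fun ω => (X ω, Z' ω)) (fun t => (t.1, f t.2))
      (fun t => (t.1, g t.2)) (fun ω => by simp [hf ω]) (fun ω => by simp [hg ω])]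

lemma cmi_congr_left {X : Ω → A} {X' : Ω → A'} (Y : Ω → B) (Z : Ω → C) (f : A → A')
    (g : A' → A) (hf : ∀ ω, f (X ω) = X' ω) (hg : ∀ ω, g (X' ω) = X ω) :
    CMI p X Y Z = CMI p X' Y Z := by
  rw [CMI, CMI, condEnt_congr_left p Z f g hf hg,
    condEnt_congr_left p Z (X := fun ω => (X ω, Y ω)) (X' := fun ω => (X' ω, Y ω))
      (fun t => (f t.1, t.2)) (fun t => (g t.1, t.2)) (fun ω => by simp [hf ω])
      (fun ω => by simp [hg ω])]

lemma cmi_congr_right (X : Ω → A) (Y : Ω → B) {Z : Ω → C} {Z' : Ω → C'} (f : C → C')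
    (g : C' → C) (hf : ∀ ω, f (Z ω) = Z' ω) (hg : ∀ ω, g (Z' ω) = Z ω) :
    CMI p X Y Z = CMI p X Y Z' := by
  rw [CMI, CMI, condEnt_congr_right p X f g hf hg, condEnt_congr_right p Y f g hf hg,
    condEnt_congr_right p _ f g hf hg]

lemma mi_congr_right (X : Ω → A) {Y : Ω → B} {Y' : Ω → C} (f : B → C) (g : C → B)
    (hf : ∀ ω, f (Y ω) = Y' ω) (hg : ∀ ω, g (Y' ω) = Y ω) :
    MI p X Y = MI p X Y' := by
  rw [MI, MI, ent_congr p f g hf hg,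
    ent_congr p (X := fun ω => (X ω, Y ω)) (Y := fun ω => (X ω, Y' ω)) (fun t => (t.1, f t.2))
      (fun t => (t.1, g t.2)) (fun ω => by simp [hf ω]) (fun ω => by simp [hg ω])]

lemma cmi_nonneg (hp : ∀ ω, 0 ≤ p ω) (X : Ω → A) (Y : Ω → B) (Z : Ω → C) :
    0 ≤ CMI p X Y Z := by
  set r : C → A → B → ℝ := fun c a b => rvDist p (fun ω => ((X ω, Y ω), Z ω)) ((a, b), c)
  have hXZ : ∀ a c, rvDist p (fun ω => (X ω, Z ω)) (a, c) = ∑ b, r c a b := by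
    intro a c; unfold r rvDist; rw [sum_comm]; simp [Prod.ext_iff, ite_and]
  have hYZ : ∀ b c, rvDist p (fun ω => (Y ω, Z ω)) (b, c) = ∑ a, r c a b := by
    intro b c; unfold r rvDist; rw [sum_comm]; simp [Prod.ext_iff, ite_and]
  have hZ : ∀ c, rvDist p Z c = ∑ a, ∑ b, r c a b := by
    intro c; unfold r rvDist
    rw [← Fintype.sum_prod_type', sum_comm]
    simp [Prod.ext_iff, ite_and, Fintype.sum_prod_type]
  have hcmi : CMI p X Y Z = ∑ c, (∑ a, negMulLog (∑ b, r c a b)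
      + ∑ b, negMulLog (∑ a, r c a b) - negMulLog (∑ a, ∑ b, r c a b)
      - ∑ a, ∑ b, negMulLog (r c a b)) := by
    have hT : ∀ c, ∑ b, ∑ a, negMulLog (r c a b) = ∑ a, ∑ b, negMulLog (r c a b) :=
      fun c => sum_comm
    simp only [CMI, condEnt, ent, Fintype.sum_prod_type_right, hXZ, hYZ, hZ, sum_add_distrib,
      sum_sub_distrib, r] at hT ⊢
    simp only [hT]
    ring
  rw [hcmi]
  exact sum_nonneg fun c _ => sub_nonneg.2 (by
    linarith [negMulLog_sum_add_sum_negMulLog_le (r c) fun a b => rvDist_nonneg p hp _ _])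

lemma cmi_comm (X : Ω → A) (Y : Ω → B) (Z : Ω → C) : CMI p X Y Z = CMI p Y X Z := by
  rw [CMI, CMI, condEnt_congr_left p Z (X := fun ω => (X ω, Y ω)) (X' := fun ω => (Y ω, X ω))
    Prod.swap Prod.swap (fun ω => rfl) (fun ω => rfl)]
  ring

lemma cmi_eq_condEnt_sub_condEnt (X : Ω → A) (Y : Ω → B) (Z : Ω → C) :
    CMI p X Y Z = condEnt p X Z - condEnt p X (fun ω => (Y ω, Z ω)) := by
  have h : ent p (fun ω => ((X ω, Y ω), Z ω)) = ent p (fun ω => (X ω, (Y ω, Z ω))) :=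
    ent_congr p (fun t => (t.1.1, (t.1.2, t.2))) (fun t => ((t.1, t.2.1), t.2.2))
      (fun ω => rfl) (fun ω => rfl)
  rw [CMI, condEnt, condEnt, condEnt, condEnt, h]
  ring

lemma condEnt_nonneg (hp : ∀ ω, 0 ≤ p ω) (X : Ω → A) (Z : Ω → C) : 0 ≤ condEnt p X Z := by
  have h := cmi_nonneg p hp X X Z
  rwa [CMI, condEnt_congr_left p Z (X' := X) Prod.fst (fun a => (a, a)) (fun ω => rfl)
    (fun ω => rfl), add_sub_cancel_right] at h

lemma condEnt_pair_le (hp : ∀ ω, 0 ≤ p ω) (U : Ω → A) (V : Ω → B) (Z : Ω → C) :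
    condEnt p (fun ω => (U ω, V ω)) Z ≤ condEnt p U Z + condEnt p V Z :=
  sub_nonneg.1 (cmi_nonneg p hp U V Z)

lemma condEnt_le_of_comp (hp : ∀ ω, 0 ≤ p ω) (X : Ω → A) {Z : Ω → C} {Z' : Ω → C'}
    (g : C' → C) (hg : ∀ ω, g (Z' ω) = Z ω) : condEnt p X Z' ≤ condEnt p X Z := by
  have hZ' : condEnt p X Z' = condEnt p X (fun ω => (Z' ω, Z ω)) :=
    condEnt_congr_right p X (fun z => (z, g z)) Prod.fst (fun ω => by simp [hg ω])
      (fun ω => rfl)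
  have := cmi_eq_condEnt_sub_condEnt p X Z' Z
  linarith [cmi_nonneg p hp X Z' Z]

lemma condEnt_eq_zero_of_comp (hp : ∀ ω, 0 ≤ p ω) (X : Ω → A) {Z : Ω → C} {Z' : Ω → C'}
    (g : C' → C) (hg : ∀ ω, g (Z' ω) = Z ω) (h : condEnt p X Z = 0) : condEnt p X Z' = 0 :=
  le_antisymm (h ▸ condEnt_le_of_comp p hp X g hg) (condEnt_nonneg p hp X Z')

lemma cmi_eq_zero_of_condEnt_eq_zero (hp : ∀ ω, 0 ≤ p ω) (X : Ω → A) (Y : Ω → B)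
    (Z : Ω → C) (h : condEnt p X Z = 0) : CMI p X Y Z = 0 := by
  rw [cmi_eq_condEnt_sub_condEnt, h,
    condEnt_eq_zero_of_comp p hp X (Z' := fun ω => (Y ω, Z ω)) Prod.snd (fun ω => rfl) h,
    sub_zero]

lemma condEnt_eq_zero_of_unique [Unique D] (W : Ω → D) (Z : Ω → C) : condEnt p W Z = 0 := by
  rw [condEnt, ent_congr p (Y := Z) Prod.snd (fun z => (default, z)) (fun ω => rfl)
    (fun ω => by simp [Unique.eq_default (W ω)]), sub_self]

lemma mi_eq_zero_of_unique [Unique D] (hp1 : ∑ ω, p ω = 1) (X : Ω → A) (W : Ω → D) :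
    MI p X W = 0 := by
  rw [MI, ent_eq_zero_of_unique p hp1 W, ent_congr p (Y := X) Prod.fst (fun a => (a, default))
    (fun ω => rfl) (fun ω => by simp [Unique.eq_default (W ω)])]
  ring

lemma cmi_chain (X : Ω → A) (W : Ω → D) (Y : Ω → B) (Z : Ω → C) :
    CMI p (fun ω => (X ω, W ω)) Y Z = CMI p X Y Z + CMI p W Y (fun ω => (X ω, Z ω)) := by
  have e1 : ent p (fun ω => (W ω, (X ω, Z ω))) = ent p (fun ω => ((X ω, W ω), Z ω)) :=
    ent_congr p (fun t => ((t.2.1, t.1), t.2.2)) (fun t => (t.1.2, (t.1.1, t.2)))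
      (fun ω => rfl) (fun ω => rfl)
  have e2 : ent p (fun ω => (Y ω, (X ω, Z ω))) = ent p (fun ω => ((X ω, Y ω), Z ω)) :=
    ent_congr p (fun t => ((t.2.1, t.1), t.2.2)) (fun t => (t.1.2, (t.1.1, t.2)))
      (fun ω => rfl) (fun ω => rfl)
  have e3 : ent p (fun ω => ((W ω, Y ω), (X ω, Z ω))) =
      ent p (fun ω => (((X ω, W ω), Y ω), Z ω)) :=
    ent_congr p (fun t => (((t.2.1, t.1.1), t.1.2), t.2.2))
      (fun t => ((t.1.1.2, t.1.2), (t.1.1.1, t.2))) (fun ω => rfl) (fun ω => rfl)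
  simp only [CMI, condEnt, e1, e2, e3]
  ring

lemma mi_chain (X : Ω → A) (Y : Ω → B) (Z : Ω → C) :
    MI p X (fun ω => (Y ω, Z ω)) = MI p X Z + CMI p Y X Z := by
  have e : ent p (fun ω => (X ω, (Y ω, Z ω))) = ent p (fun ω => ((Y ω, X ω), Z ω)) :=
    ent_congr p (fun t => ((t.2.1, t.1), t.2.2)) (fun t => (t.1.2, (t.1.1, t.2)))
      (fun ω => rfl) (fun ω => rfl)
  simp only [MI, CMI, condEnt, e]
  ring

lemma mi_add_cmi_eq_mi_add_cmi (X : Ω → A) (Y : Ω → B) (Z : Ω → C) :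
    MI p X Y + CMI p Z X Y = MI p X Z + CMI p Y X Z := by
  rw [← mi_chain, ← mi_chain]
  exact mi_congr_right p X Prod.swap Prod.swap (fun ω => rfl) (fun ω => rfl)

lemma cmi_eq_cmi_of_condEnt_eq_zero_of_cmi_eq_zero (hp : ∀ ω, 0 ≤ p ω) (X : Ω → A)
    (V : Ω → A') (Y : Ω → B) (Z : Ω → C)
    (hdet : condEnt p V (fun ω => (X ω, Z ω)) = 0)
    (hmarkov : CMI p X Y (fun ω => (Z ω, V ω)) = 0) :
    CMI p X Y Z = CMI p V Y Z := by
  have hXV := cmi_chain p X V Y Z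
  have hVX := cmi_chain p V X Y Z
  rw [cmi_eq_zero_of_condEnt_eq_zero p hp V Y _ hdet] at hXV
  rw [cmi_congr_right p X Y (Z := fun ω => (V ω, Z ω)) (Z' := fun ω => (Z ω, V ω))
    Prod.swap Prod.swap (fun ω => rfl) (fun ω => rfl), hmarkov] at hVX
  rw [cmi_congr_left p Y Z (X := fun ω => (X ω, V ω)) (X' := fun ω => (V ω, X ω))
    Prod.swap Prod.swap (fun ω => rfl) (fun ω => rfl)] at hXV
  linarith

end Entropy

lemma snoc_pre {Ω C : Type*} {m : ℕ} (w : Fin m → Ω → C) {k : ℕ} (h : k < m) (ω : Ω) :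
    Fin.snoc (pre w k h.le ω) (w ⟨k, h⟩ ω) = pre w (k + 1) h ω := by
  funext j
  refine Fin.lastCases ?_ (fun j => ?_) j
  · simp only [Fin.snoc_last]; rfl
  · simp only [Fin.snoc_castSucc]; rfl

section Prefix

variable {Ω M A C : Type*} [Fintype Ω] [Fintype M] [DecidableEq M] [Fintype A] [DecidableEq A]
  [Fintype C] [DecidableEq C] {m : ℕ} (p : Ω → ℝ)

lemma condEnt_pre_succ_le (hp : ∀ ω, 0 ≤ p ω) (w : Fin m → Ω → A) (Z : Ω → C) {k : ℕ}
    (h : k < m) :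
    condEnt p (pre w (k + 1) h) Z ≤ condEnt p (w ⟨k, h⟩) Z + condEnt p (pre w k h.le) Z := by
  rw [condEnt_congr_left p Z (X' := fun ω => (w ⟨k, h⟩ ω, pre w k h.le ω))
    (fun v => (v (Fin.last k), Fin.init v)) (fun t => Fin.snoc t.2 t.1) (fun ω => rfl)
    (fun ω => snoc_pre w h ω)]
  exact condEnt_pair_le p hp _ _ Z

lemma condEnt_pre_eq_zero (hp : ∀ ω, 0 ≤ p ω) (w : Fin m → Ω → A) (Z : Ω → C) :
    ∀ (k : ℕ) (hk : k ≤ m), (∀ j : Fin k, condEnt p (w (Fin.castLE hk j)) Z = 0) →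
      condEnt p (pre w k hk) Z = 0
  | 0, _, _ => condEnt_eq_zero_of_unique p _ Z
  | k + 1, hk, h => by
    have hw : condEnt p (w ⟨k, hk⟩) Z = 0 := h (Fin.last k)
    have hpre := condEnt_pre_eq_zero hp w Z k (Nat.le_of_succ_le hk) fun j => h j.castSucc
    exact le_antisymm (by linarith [condEnt_pre_succ_le p hp w Z hk])
      (condEnt_nonneg p hp _ Z)

lemma mi_pre_succ (X : Ω → M) (w : Fin m → Ω → C) {k : ℕ} (h : k < m) :
    MI p X (pre w (k + 1) h) = MI p X (pre w k h.le) + CMI p X (w ⟨k, h⟩) (pre w k h.le) := by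
  rw [mi_congr_right p X (Y' := fun ω => (w ⟨k, h⟩ ω, pre w k h.le ω))
    (fun v => (v (Fin.last k), Fin.init v)) (fun t => Fin.snoc t.2 t.1)
    (fun ω => rfl) (fun ω => snoc_pre w h ω), mi_chain, cmi_comm]

lemma mi_pre_eq_sum (hp1 : ∑ ω, p ω = 1) (X : Ω → M) (w : Fin m → Ω → C) :
    ∀ (k : ℕ) (hk : k ≤ m), MI p X (pre w k hk) =
      ∑ j : Fin k, CMI p X (w (Fin.castLE hk j)) (pre w j (j.isLt.le.trans hk))
  | 0, _ => by simp [mi_eq_zero_of_unique p hp1]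
  | k + 1, hk => by
    rw [mi_pre_succ p X w hk, mi_pre_eq_sum hp1 X w k, Fin.sum_univ_castSucc]
    rfl

/-- Lemma 1 of the paper. -/
theorem mi_eq_di_of_condEnt_eq_zero_of_cmi_eq_zero (hp : ∀ ω, 0 ≤ p ω) (hp1 : ∑ ω, p ω = 1)
    (x0 : Ω → M) (x : Fin m → Ω → A) (e : Fin m → Ω → C)
    (hdet : ∀ i : Fin m, condEnt p (x i) (fun ω => (x0 ω, pre e i.1 i.isLt.le ω)) = 0)
    (hmarkov : ∀ i : Fin m, CMI p x0 (e i)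
      (fun ω => (pre e i.1 i.isLt.le ω, pre x (i.1 + 1) i.isLt ω)) = 0) :
    MI p x0 (fun ω i => e i ω) = DI p x e := by
  refine (mi_pre_eq_sum p hp1 x0 e m le_rfl).trans (sum_congr rfl fun i _ => ?_)
  refine cmi_eq_cmi_of_condEnt_eq_zero_of_cmi_eq_zero p hp _ _ _ _ ?_ (hmarkov i)
  refine condEnt_pre_eq_zero p hp x _ _ _ fun j => ?_
  exact condEnt_eq_zero_of_comp p hp _
    (fun t => (t.1, fun l => t.2 (Fin.castLE (Nat.lt_succ_iff.1 j.isLt) l))) (fun ω => rfl)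
    (hdet _)

end Prefix

/-- Indexing: `n = m + 1`, so `x` and `y` have length `m + 1` and `e` has length `m`. -/
theorem forward_flow_lower_bound {Ω M A B C : Type*} [Fintype Ω]
    [Fintype M] [DecidableEq M] [Fintype A] [DecidableEq A]
    [Fintype B] [DecidableEq B] [Fintype C] [DecidableEq C] {m : ℕ} (p : Ω → ℝ)
    (hp : ∀ ω, 0 ≤ p ω) (hp1 : ∑ ω, p ω = 1)
    (x0 : Ω → M) (x : Fin (m+1) → Ω → A) (y : Fin (m+1) → Ω → B) (e : Fin m → Ω → C)
    (hidentity : DI p x y =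
      MI p x0 (fun ω i => y i ω) +
      CMI p (fun ω i => e i ω) x0 (fun ω i => y i ω) +
      ∑ i : Fin (m+1), CMI p (pre e i.1 (Nat.lt_succ_iff.mp i.isLt)) (y i)
        (pre y i.1 i.isLt.le))
    (hdet : ∀ i : Fin m, condEnt p (x i.castSucc)
      (fun ω => (x0 ω, pre e i.1 i.isLt.le ω)) = 0)
    (hmarkov : ∀ i : Fin m,
      CMI p x0 (e i) (fun ω => (pre e i.1 i.isLt.le ω,
        pre (fun j : Fin m => x j.castSucc) (i.1+1) i.isLt ω)) = 0) :
    DI p x y ≥ DI p (fun j : Fin m => x j.castSucc) e +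
      ∑ i : Fin (m+1), CMI p (pre e i.1 (Nat.lt_succ_iff.mp i.isLt)) (y i)
        (pre y i.1 i.isLt.le) ∧
    DI p x y = DI p (fun j : Fin m => x j.castSucc) e +
      ∑ i : Fin (m+1), CMI p (pre e i.1 (Nat.lt_succ_iff.mp i.isLt)) (y i)
        (pre y i.1 i.isLt.le) +
      CMI p (fun ω i => y i ω) x0 (fun ω i => e i ω) := by
  have hmi := mi_eq_di_of_condEnt_eq_zero_of_cmi_eq_zero p hp hp1 x0
    (fun j => x j.castSucc) e hdet hmarkov
  have hchain := mi_add_cmi_eq_mi_add_cmi p x0 (fun ω i => y i ω) (fun ω i => e i ω)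
  have hgap := cmi_nonneg p hp (fun ω i => y i ω) x0 (fun ω i => e i ω)
  constructor <;> linarith
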